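/- Let T = (V,E) be a finite tree and O ⊂ V. If R is a star arrangement of equivalence classes of V∖O with |R| > 1, then the intersection ∩_{r∈R} ∂r contains exactly one observer. -/

import Mathlib

/-!
If two distinct observers `o ≠ o'` both bound a class `r`, pick neighbours `a, b ∈ r` of `o`
and `o'`. The path from `a` to `b` stays inside `r`, hence avoids `O ∋ o, o'`, so
`o, a, …, b, o'` is a path and, by uniqueness of paths in a tree, it is *the* path from `o`
to `o'`. Thus the second vertex of that path lies in every class bounded by both observers,
and since distinct classes are disjoint, no two distinct classes can share two observers.
-/

open MeasureTheory ProbabilityTheory SimpleGraph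

variable {V : Type*}

/-- The unique path between two vertices of a tree, as a walk. -/
noncomputable def treePath (G : SimpleGraph V) (hG : G.IsTree) (u v : V) : G.Walk u v :=
  (hG.existsUnique_path u v).choose

/-- The equivalence class (for the relation "the connecting path avoids the observer
set `O`") of a non-observer vertex `u`. -/
def classOf (G : SimpleGraph V) (hG : G.IsTree) (O : Set V) (u : V) : Set V :=
  {w | w ∉ O ∧ ∀ x ∈ (treePath G hG u w).support, x ∉ O}

/-- The boundary `∂r` of a set `r`: the observers adjacent to some vertex of `r`. -/
def boundary (G : SimpleGraph V) (O : Set V) (r : Set V) : Set V :=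
  {o | o ∈ O ∧ ∃ u ∈ r, G.Adj o u}

/-- `V_{o;R}`: vertices whose path from `o` meets no class of `R`. -/
def subtreeVerts (G : SimpleGraph V) (hG : G.IsTree) (R : Set (Set V)) (o : V) : Set V :=
  {w | ∀ r ∈ R, ∀ x ∈ (treePath G hG o w).support, x ∉ r}

/-- Infection time of `v` for source `s` and edge delays `d`: the sum of the delays
along the unique path from `s` to `v`. -/
noncomputable def infectionTime (G : SimpleGraph V) (hG : G.IsTree) (d : Sym2 V → ℝ)
    (s v : V) : ℝ :=
  (((treePath G hG s v).edges).map d).sum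

/-- A class `r` is feasible for observer infection times `τ` if, for every `o ∈ ∂r` and
observers `o₁, o₂` in the subtree `T_{o;r}` with `o₁` an ancestor of `o₂` (i.e. `o₁` on
the path from `o` to `o₂`), `τ o₁ ≤ τ o₂`. -/
def feasible (G : SimpleGraph V) (hG : G.IsTree) (O : Set V) (τ : V → ℝ) (r : Set V) :
    Prop :=
  ∀ o ∈ boundary G O r, ∀ o₁ ∈ subtreeVerts G hG {r} o ∩ O,
    ∀ o₂ ∈ subtreeVerts G hG {r} o ∩ O,
      o₁ ∈ (treePath G hG o o₂).support → τ o₁ ≤ τ o₂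

section TreePath

variable {G : SimpleGraph V} (hG : G.IsTree)

lemma treePath_isPath (u v : V) : (treePath G hG u v).IsPath :=
  (hG.existsUnique_path u v).choose_spec.1

lemma eq_treePath {u v : V} {p : G.Walk u v} (hp : p.IsPath) : p = treePath G hG u v :=
  (hG.existsUnique_path u v).choose_spec.2 p hp

lemma mem_support_treePath_comm {u v x : V} :
    x ∈ (treePath G hG u v).support ↔ x ∈ (treePath G hG v u).support := by
  rw [← eq_treePath hG (treePath_isPath hG v u).reverse, Walk.support_reverse, List.mem_reverse]

lemma mem_support_treePath_or (w : V) {u v x : V} (hx : x ∈ (treePath G hG u v).support) :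
    x ∈ (treePath G hG w u).support ∨ x ∈ (treePath G hG w v).support := by
  classical
  let p := (treePath G hG w u).reverse.append (treePath G hG w v)
  rw [← eq_treePath hG p.bypass_isPath] at hx
  replace hx := p.support_bypass_subset_support hx
  rw [Walk.mem_support_append_iff, Walk.support_reverse, List.mem_reverse] at hx
  exact hx

variable {O : Set V}

lemma classOf_eq_of_mem {u w : V} (hw : w ∈ classOf G hG O u) :
    classOf G hG O u = classOf G hG O w := by
  obtain ⟨-, huw⟩ := hw
  ext v
  refine and_congr_right fun _ => ⟨fun huv x hx => ?_, fun hwv x hx => ?_⟩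
  · rcases mem_support_treePath_or hG u hx with h | h
    · exact huw x h
    · exact huv x h
  · rcases mem_support_treePath_or hG w hx with h | h
    · exact huw x ((mem_support_treePath_comm hG).1 h)
    · exact hwv x h

lemma eq_of_mem_classOf_inter {u₁ u₂ w : V} (h₁ : w ∈ classOf G hG O u₁)
    (h₂ : w ∈ classOf G hG O u₂) : classOf G hG O u₁ = classOf G hG O u₂ :=
  (classOf_eq_of_mem hG h₁).trans (classOf_eq_of_mem hG h₂).symm

lemma not_mem_of_mem_support_treePath {u a b x : V} (ha : a ∈ classOf G hG O u)
    (hb : b ∈ classOf G hG O u) (hx : x ∈ (treePath G hG a b).support) : x ∉ O := by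
  rcases mem_support_treePath_or hG u hx with h | h
  · exact ha.2 x h
  · exact hb.2 x h

lemma snd_treePath_mem_classOf {u o o' : V} (hne : o ≠ o')
    (ho : o ∈ boundary G O (classOf G hG O u)) (ho' : o' ∈ boundary G O (classOf G hG O u)) :
    (treePath G hG o o').snd ∈ classOf G hG O u := by
  obtain ⟨hoO, a, ha, hoa⟩ := ho
  obtain ⟨ho'O, b, hb, ho'b⟩ := ho'
  have hab : (treePath G hG a b).IsPath := treePath_isPath hG a b
  have hpath : (Walk.cons hoa ((treePath G hG a b).concat ho'b.symm)).IsPath := by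
    refine (hab.concat (fun h => not_mem_of_mem_support_treePath hG ha hb h ho'O) _).cons ?_
    rw [Walk.support_concat, List.mem_append, List.mem_singleton, not_or]
    exact ⟨fun h => not_mem_of_mem_support_treePath hG ha hb h hoO, hne⟩
  rw [← eq_treePath hG hpath, Walk.snd_cons]
  exact ha

end TreePath

theorem star_arrangement_unique_center_general
    (G : SimpleGraph V) (hG : G.IsTree) (O : Set V)
    (R : Set (Set V)) (hR : ∀ r ∈ R, ∃ u, u ∉ O ∧ r = classOf G hG O u)
    (hcard : ∃ r₁ ∈ R, ∃ r₂ ∈ R, r₁ ≠ r₂)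
    (hstar : (⋂ r ∈ R, boundary G O r).Nonempty) :
    ∃! o : V, o ∈ ⋂ r ∈ R, boundary G O r := by
  obtain ⟨o, ho⟩ := hstar
  refine ⟨o, ho, fun o' ho' => ?_⟩
  by_contra hne
  obtain ⟨r₁, hr₁, r₂, hr₂, hr₁₂⟩ := hcard
  obtain ⟨u₁, -, rfl⟩ := hR r₁ hr₁
  obtain ⟨u₂, -, rfl⟩ := hR r₂ hr₂
  rw [Set.mem_iInter₂] at ho ho'
  exact hr₁₂ <| eq_of_mem_classOf_inter hG
    (snd_treePath_mem_classOf hG hne (ho' _ hr₁) (ho _ hr₁))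
    (snd_treePath_mem_classOf hG hne (ho' _ hr₂) (ho _ hr₂))

/-- In a finite tree, if `R` is a star arrangement of equivalence classes of `V ∖ O` with
more than one class, then the intersection of their boundaries contains exactly one
observer. -/
theorem star_arrangement_unique_center
    [Fintype V] (G : SimpleGraph V) (hG : G.IsTree) (O : Set V)
    (R : Set (Set V)) (hR : ∀ r ∈ R, ∃ u, u ∉ O ∧ r = classOf G hG O u)
    (hcard : ∃ r₁ ∈ R, ∃ r₂ ∈ R, r₁ ≠ r₂)
    (hstar : (⋂ r ∈ R, boundary G O r).Nonempty) :
    ∃! o : V, o ∈ ⋂ r ∈ R, boundary G O r :=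
  star_arrangement_unique_center_general G hG O R hR hcard hstar
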